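/- Let C be a category with finite products and binary coproducts, and let X be an object of C. Then the coKleisli category C_X of the reader comonad X×− has binary coproducts preserved by the cofree functor F_X : C → C_X if and only if the endofunctor X×− : C → C preserves binary coproducts (i.e., for all objects A, B the canonical morphism (X×A)+(X×B) → X×(A+B) is an isomorphism). -/

import Mathlib

open CategoryTheory CategoryTheory.Limits

universe w v u

section CoKl

variable (C : Type u) [Category.{v} C] [HasFiniteProducts C]

/-- The coKleisli category of the reader comonad `X × -` on `C`: objects are those of `C`,
morphisms `A ⇝ B` are `C`-morphisms `X ⨯ A ⟶ B`, the identity of `A` is `pr₂` and the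
composite of `g : A ⇝ B` and `h : B ⇝ C` is `h ∘ ⟨pr₁, g⟩`. -/
def CoKl (X : C) : Type u := C

variable {C}

/-- Regard an object of `C` as an object of the coKleisli category `CoKl C X`. -/
def CoKl.mk (X A : C) : CoKl C X := A

noncomputable instance CoKl.category (X : C) : Category.{v} (CoKl C X) where
  Hom A B := (X ⨯ (A : C)) ⟶ (B : C)
  id A := (prod.snd : X ⨯ (A : C) ⟶ (A : C))
  comp {A B D} f g := prod.lift prod.fst f ≫ g
  id_comp {A B} f := (congrArg (· ≫ f) (prod.lift_fst_snd (X := X) (Y := (A : C)))).trans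
    (Category.id_comp f)
  comp_id f := prod.lift_snd _ _
  assoc {A B D E} f g h := by
    show prod.lift prod.fst (prod.lift prod.fst f ≫ g) ≫ h
      = prod.lift prod.fst f ≫ (prod.lift prod.fst g ≫ h)
    exact (congrArg (· ≫ h) ((prod.comp_lift (prod.lift prod.fst f) prod.fst g).trans
      (congrArg (fun x => prod.lift x (prod.lift prod.fst f ≫ g)) (prod.lift_fst prod.fst f))).symm).trans (Category.assoc _ _ _)

/-- The cofree functor `F_X : C ⥤ CoKl C X`: the identity on objects, sending
`f : A ⟶ B` to `f ∘ pr₂ : A ⇝ B`. -/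
noncomputable def FX (X : C) : C ⥤ CoKl C X where
  obj A := CoKl.mk X A
  map {A B} f := (prod.snd ≫ f : X ⨯ A ⟶ B)
  map_id A := by simp; rfl
  map_comp {A B D} f g := by
    show prod.snd ≫ f ≫ g = prod.lift prod.fst (prod.snd ≫ f) ≫ (prod.snd ≫ g)
    exact ((prod.lift_snd_assoc _ _ _).trans (Category.assoc _ _ _)).symm

end CoKl

section Aux

variable {C : Type u} [Category.{v} C] [HasFiniteProducts C] [HasBinaryCoproducts C]

omit [HasBinaryCoproducts C] in
lemma lift_fst_snd_comp (X : C) {A B : C} (k : A ⟶ B) :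
    prod.lift (prod.fst : X ⨯ A ⟶ X) (prod.snd ≫ k) = prod.map (𝟙 X) k := by
  apply Limits.prod.hom_ext <;> simp only [prod.lift_fst, prod.lift_snd, prod.map_fst, prod.map_snd, Category.comp_id]

/-- The canonical comparison map. -/
noncomputable abbrev compMap (X A B : C) : (X ⨯ A) ⨿ (X ⨯ B) ⟶ X ⨯ (A ⨿ B) :=
  coprod.desc (prod.map (𝟙 X) (coprod.inl : A ⟶ A ⨿ B)) (prod.map (𝟙 X) (coprod.inr : B ⟶ A ⨿ B))

/-- If the comparison map is an iso, the cofan in the coKleisli category is colimiting. -/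
noncomputable def isColimitOfIsIso (X A B : C) [IsIso (compMap X A B)] :
    IsColimit (BinaryCofan.mk
      ((FX X).map (coprod.inl : A ⟶ A ⨿ B)) ((FX X).map (coprod.inr : B ⟶ A ⨿ B))) := by
  refine BinaryCofan.IsColimit.mk _
    (fun {T} f g => (inv (compMap X A B) ≫ coprod.desc f g : X ⨯ (A ⨿ B) ⟶ (T : C)))
    (fun {T} f g => ?_) (fun {T} f g => ?_) (fun {T} f g m h₁ h₂ => ?_)
  · show prod.lift prod.fst (prod.snd ≫ coprod.inl) ≫ inv (compMap X A B) ≫ coprod.desc f g = f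
    exact (show ∀ {T' : C} (f : X ⨯ A ⟶ T') (g : X ⨯ B ⟶ T'), prod.lift prod.fst (prod.snd ≫ coprod.inl) ≫ inv (compMap X A B) ≫ coprod.desc f g = f from by
      intro T' f g
      rw [lift_fst_snd_comp,
      show prod.map (𝟙 X) (coprod.inl : A ⟶ A ⨿ B) = coprod.inl ≫ compMap X A B by exact (coprod.inl_desc _ _).symm,
      Category.assoc, IsIso.hom_inv_id_assoc, coprod.inl_desc]) f g
  · show prod.lift prod.fst (prod.snd ≫ coprod.inr) ≫ inv (compMap X A B) ≫ coprod.desc f g = g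
    exact (show ∀ {T' : C} (f : X ⨯ A ⟶ T') (g : X ⨯ B ⟶ T'), prod.lift prod.fst (prod.snd ≫ coprod.inr) ≫ inv (compMap X A B) ≫ coprod.desc f g = g from by
      intro T' f g
      rw [lift_fst_snd_comp,
      show prod.map (𝟙 X) (coprod.inr : B ⟶ A ⨿ B) = coprod.inr ≫ compMap X A B by exact (coprod.inr_desc _ _).symm,
      Category.assoc, IsIso.hom_inv_id_assoc, coprod.inr_desc]) f g
  · replace h₁ : prod.lift prod.fst (prod.snd ≫ coprod.inl) ≫ m = f := h₁
    replace h₂ : prod.lift prod.fst (prod.snd ≫ coprod.inr) ≫ m = g := h₂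
    rw [lift_fst_snd_comp] at h₁ h₂
    have e : compMap X A B ≫ (m : X ⨯ (A ⨿ B) ⟶ (T : C))
        = (coprod.desc f g : (X ⨯ A) ⨿ (X ⨯ B) ⟶ (T : C)) := by
      exact (show ∀ {T' : C} (f : X ⨯ A ⟶ T') (g : X ⨯ B ⟶ T') (m : X ⨯ (A ⨿ B) ⟶ T'), prod.map (𝟙 X) coprod.inl ≫ m = f → prod.map (𝟙 X) coprod.inr ≫ m = g → compMap X A B ≫ m = coprod.desc f g from by
        intro T' f g m h₁ h₂
        apply coprod.hom_ext <;> simp [h₁, h₂]) f g m h₁ h₂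
    exact (IsIso.eq_inv_comp _).mpr e

/-- If the cofan in the coKleisli category is colimiting, the comparison map is an iso. -/
lemma isIso_of_isColimit (X A B : C)
    (hc : IsColimit (BinaryCofan.mk
      ((FX X).map (coprod.inl : A ⟶ A ⨿ B)) ((FX X).map (coprod.inr : B ⟶ A ⨿ B)))) :
    IsIso (compMap X A B) := by
  let h : (CoKl.mk X (A ⨿ B) : CoKl C X) ⟶ CoKl.mk X ((X ⨯ A) ⨿ (X ⨯ B)) :=
    hc.desc (BinaryCofan.mk
      ((coprod.inl : X ⨯ A ⟶ (X ⨯ A) ⨿ (X ⨯ B)) :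
        (CoKl.mk X A : CoKl C X) ⟶ CoKl.mk X ((X ⨯ A) ⨿ (X ⨯ B)))
      ((coprod.inr : X ⨯ B ⟶ (X ⨯ A) ⨿ (X ⨯ B)) :
        (CoKl.mk X B : CoKl C X) ⟶ CoKl.mk X ((X ⨯ A) ⨿ (X ⨯ B))))
  have fac₁ : prod.lift prod.fst (prod.snd ≫ coprod.inl) ≫ h = (coprod.inl : X ⨯ A ⟶ _) :=
    hc.fac _ ⟨WalkingPair.left⟩
  have fac₂ : prod.lift prod.fst (prod.snd ≫ coprod.inr) ≫ h = (coprod.inr : X ⨯ B ⟶ _) :=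
    hc.fac _ ⟨WalkingPair.right⟩
  rw [lift_fst_snd_comp] at fac₁ fac₂
  refine ⟨(h : X ⨯ (A ⨿ B) ⟶ (X ⨯ A) ⨿ (X ⨯ B)), ?_, ?_⟩
  · apply coprod.hom_ext
    · erw [coprod.inl_desc_assoc]; exact fac₁.trans (Category.comp_id _).symm
    · erw [coprod.inr_desc_assoc]; exact fac₂.trans (Category.comp_id _).symm
  · have := BinaryCofan.IsColimit.hom_ext (W := CoKl.mk X (X ⨯ (A ⨿ B))) hc
      (f := ((h ≫ compMap X A B : X ⨯ (A ⨿ B) ⟶ X ⨯ (A ⨿ B)) :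
        (CoKl.mk X (A ⨿ B) : CoKl C X) ⟶ CoKl.mk X (X ⨯ (A ⨿ B))))
      (g := ((𝟙 (X ⨯ (A ⨿ B)) : X ⨯ (A ⨿ B) ⟶ X ⨯ (A ⨿ B)) :
        (CoKl.mk X (A ⨿ B) : CoKl C X) ⟶ CoKl.mk X (X ⨯ (A ⨿ B)))) ?_ ?_
    · exact this
    · show prod.lift prod.fst (prod.snd ≫ coprod.inl) ≫ h ≫ compMap X A B
        = prod.lift prod.fst (prod.snd ≫ coprod.inl) ≫ 𝟙 _
      rw [lift_fst_snd_comp]; erw [← Category.assoc, fac₁]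
      simp
      exact coprod.inl_desc _ _
    · show prod.lift prod.fst (prod.snd ≫ coprod.inr) ≫ h ≫ compMap X A B
        = prod.lift prod.fst (prod.snd ≫ coprod.inr) ≫ 𝟙 _
      rw [lift_fst_snd_comp]; erw [← Category.assoc, fac₂]
      simp
      exact coprod.inr_desc _ _

end Aux

/-- For `C` with finite products and binary coproducts, the coKleisli
category `C_X` of the reader comonad has binary coproducts preserved by the cofree functor
`F_X` iff the endofunctor `X × -` preserves binary coproducts, i.e. iff for all `A B` the
canonical morphism `(X ⨯ A) ⨿ (X ⨯ B) ⟶ X ⨯ (A ⨿ B)` is an isomorphism. -/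
theorem coKl_binaryCoproducts_iff {C : Type u} [Category.{v} C] [HasFiniteProducts C]
    [HasBinaryCoproducts C] (X : C) :
    (HasBinaryCoproducts (CoKl C X) ∧
      ∀ A B : C, Nonempty (IsColimit (BinaryCofan.mk
        ((FX X).map (coprod.inl : A ⟶ A ⨿ B)) ((FX X).map (coprod.inr : B ⟶ A ⨿ B))))) ↔
    (∀ A B : C, IsIso (coprod.desc
        (prod.map (𝟙 X) (coprod.inl : A ⟶ A ⨿ B))
        (prod.map (𝟙 X) (coprod.inr : B ⟶ A ⨿ B)))) := by
  constructor
  · rintro ⟨-, hcolim⟩ A B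
    exact isIso_of_isColimit X A B (hcolim A B).some
  · intro hiso
    have colim : ∀ A B : C, Nonempty (IsColimit (BinaryCofan.mk
        ((FX X).map (coprod.inl : A ⟶ A ⨿ B)) ((FX X).map (coprod.inr : B ⟶ A ⨿ B)))) :=
      fun A B => ⟨@isColimitOfIsIso _ _ _ _ X A B (hiso A B)⟩
    refine ⟨?_, colim⟩
    have : ∀ (P Q : CoKl C X), HasColimit (pair P Q) := by
      intro P Q
      exact HasColimit.mk ⟨_, (colim (P : C) (Q : C)).some⟩
    exact hasBinaryCoproducts_of_hasColimit_pair _
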